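/- arXiv:math/0703687 — 2 statements merged into one kernel-verified Lean document; each statement's English description precedes it below -/
import Mathlib

section
/- For a ∈ (0,1/2] and r, t ∈ (0,1): 2·μ_a((r+t)/(1+rt+r't')) ≤ μ_a(r) + μ_a(t), where r' = √(1−r²), t' = √(1−t²), with equality when t = r. -/
noncomputable def GaussF (a b c x : ℝ) : ℝ :=
  ∑' n : ℕ, ((ascPochhammer ℝ n).eval a * (ascPochhammer ℝ n).eval b /
    ((ascPochhammer ℝ n).eval c * n.factorial)) * x ^ n

noncomputable def muA (a r : ℝ) : ℝ :=
  (Real.pi / (2 * Real.sin (Real.pi * a))) *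
    GaussF a (1-a) 1 (1 - r^2) / GaussF a (1-a) 1 (r^2)

open Real Filter Asymptotics Set

/-!
Write `r = tanh u`, `t = tanh v`. Then `(r + t) / (1 + r t + r' t') = tanh ((u + v) / 2)`, so the
inequality is midpoint convexity of `u ↦ μ_a (tanh u)` on `(0, ∞)`, with equality at `u = v`.

For the convexity let `F = F(a, 1 - a; 1; ·)` and `x = tanh² u`. The derivative of
`μ_a (tanh u)` is `-(π / sin πa) W(x) / (tanh u · F(x)²)` with
`W(x) = x (1 - x) (F'(x) F(1 - x) + F(x) F'(1 - x))`. Because the parameters `a`, `1 - a` sum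
to `1`, the hypergeometric equation is invariant under `x ↦ 1 - x`, so `W` is constant (the
generalized Legendre relation); it is positive since `F` has positive coefficients. As
`tanh u · F(tanh² u)²` increases with `u`, the derivative increases.
-/

section PowerSeries

variable {c : ℕ → ℝ} {k : ℕ} {x y : ℝ}

noncomputable def powerSeriesSum (c : ℕ → ℝ) (x : ℝ) : ℝ := ∑' n, c n * x ^ n

noncomputable def derivCoeff (c : ℕ → ℝ) (n : ℕ) : ℝ := (n + 1) * c (n + 1)

lemma hasSum_of_hasSum_succ {f : ℕ → ℝ} {s : ℝ} (h0 : f 0 = 0)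
    (h : HasSum (fun n => f (n + 1)) s) : HasSum f s := by
  simpa [h0] using (hasSum_nat_add_iff 1).mp h

lemma isBigO_derivCoeff (hc : c =O[atTop] fun n => ((n ^ k : ℕ) : ℝ)) :
    derivCoeff c =O[atTop] fun n => ((n ^ (k + 1) : ℕ) : ℝ) := by
  have hsucc : (fun n : ℕ => (n : ℝ) + 1) =O[atTop] fun n => (n : ℝ) := by
    refine IsBigO.of_bound 2 ?_
    filter_upwards [eventually_ge_atTop 1] with n hn
    have : (1 : ℝ) ≤ n := by exact_mod_cast hn
    rw [norm_of_nonneg (by positivity), norm_of_nonneg (by positivity)]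
    linarith
  have hshift : (fun n => c (n + 1)) =O[atTop] fun n : ℕ => ((n : ℝ) + 1) ^ k := by
    simpa [Function.comp_def] using hc.comp_tendsto (tendsto_add_atTop_nat 1)
  exact (hsucc.mul (hshift.trans (hsucc.pow k))).congr (fun _ => rfl)
    (fun n => by push_cast; ring)

lemma hasSum_powerSeriesSum (hc : c =O[atTop] fun n => ((n ^ k : ℕ) : ℝ)) (hx : |x| < 1) :
    HasSum (fun n => c n * x ^ n) (powerSeriesSum c x) :=
  (summable_norm_mul_geometric_of_norm_lt_one' hx hc).of_norm.hasSum

theorem hasDerivAt_powerSeriesSum (hc : c =O[atTop] fun n => ((n ^ k : ℕ) : ℝ))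
    (hx : |x| < 1) : HasDerivAt (powerSeriesSum c) (powerSeriesSum (derivCoeff c) x) x := by
  obtain ⟨ρ, hxρ, hρ1⟩ := exists_between hx
  have hρ0 : 0 ≤ ρ := (abs_nonneg x).trans hxρ.le
  have hbound : Summable fun n => ‖c n‖ * n * ρ ^ (n - 1) := by
    rw [← summable_nat_add_iff 1]
    refine (summable_norm_mul_geometric_of_norm_lt_one' (by rwa [norm_of_nonneg hρ0])
      (isBigO_derivCoeff hc)).congr fun n => ?_
    rw [derivCoeff, norm_mul, norm_mul, norm_pow, norm_of_nonneg hρ0,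
      norm_of_nonneg (by positivity)]
    push_cast
    ring_nf
  have hderiv : HasSum (fun n => c n * (n * x ^ (n - 1))) (powerSeriesSum (derivCoeff c) x) :=
    hasSum_of_hasSum_succ (by simp) <| by
      convert hasSum_powerSeriesSum (isBigO_derivCoeff hc) hx using 1
      funext n
      simp only [derivCoeff, Nat.add_sub_cancel]
      push_cast
      ring
  have hmem : x ∈ Metric.ball 0 ρ := mem_ball_zero_iff.mpr hxρ
  have key := hasDerivAt_tsum_of_isPreconnected hbound Metric.isOpen_ball
    (convex_ball 0 ρ).isPreconnected (g := fun n y => c n * y ^ n)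
    (g' := fun n y => c n * (n * y ^ (n - 1)))
    (fun n y _ => (hasDerivAt_pow n y).const_mul (c n))
    (fun n y hy => by
      rw [norm_mul, norm_mul, norm_pow, RCLike.norm_natCast, ← mul_assoc]
      gcongr
      exact (mem_ball_zero_iff.mp hy).le)
    hmem (hasSum_powerSeriesSum hc hx).summable hmem
  rwa [hderiv.tsum_eq] at key

lemma hasSum_natCast_mul_mul_pow (hc : c =O[atTop] fun n => ((n ^ k : ℕ) : ℝ))
    (hx : |x| < 1) :
    HasSum (fun n : ℕ => n * c n * x ^ n) (x * powerSeriesSum (derivCoeff c) x) := by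
  refine hasSum_of_hasSum_succ (by simp) ?_
  convert (hasSum_powerSeriesSum (isBigO_derivCoeff hc) hx).mul_left x using 1 with n
  · rfl
  · funext n
    simp only [derivCoeff]
    push_cast
    ring

lemma powerSeriesSum_le_powerSeriesSum (hc0 : ∀ n, 0 ≤ c n)
    (hc : c =O[atTop] fun n => ((n ^ k : ℕ) : ℝ)) (hx0 : 0 ≤ x) (hxy : x ≤ y) (hy : y < 1) :
    powerSeriesSum c x ≤ powerSeriesSum c y :=
  hasSum_le (fun n => by gcongr; exact hc0 n)
    (hasSum_powerSeriesSum hc (by rw [abs_of_nonneg hx0]; linarith))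
    (hasSum_powerSeriesSum hc (by rw [abs_of_nonneg (hx0.trans hxy)]; linarith))

lemma coeff_zero_le_powerSeriesSum (hc0 : ∀ n, 0 ≤ c n)
    (hc : c =O[atTop] fun n => ((n ^ k : ℕ) : ℝ)) (hx0 : 0 ≤ x) (hx1 : x < 1) :
    c 0 ≤ powerSeriesSum c x := by
  simpa using le_hasSum (hasSum_powerSeriesSum hc (by rwa [abs_of_nonneg hx0])) 0
    fun n _ => mul_nonneg (hc0 n) (pow_nonneg hx0 n)

lemma powerSeriesSum_pos (hpos : ∀ n, 0 < c n) (hc : c =O[atTop] fun n => ((n ^ k : ℕ) : ℝ))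
    (hx0 : 0 ≤ x) (hx1 : x < 1) : 0 < powerSeriesSum c x :=
  (hpos 0).trans_le (coeff_zero_le_powerSeriesSum (fun n => (hpos n).le) hc hx0 hx1)

end PowerSeries

section Hypergeometric

variable {c : ℕ → ℝ} {k : ℕ} {a b x : ℝ}

theorem hypergeometric_ode (hc : c =O[atTop] fun n => ((n ^ k : ℕ) : ℝ))
    (hrec : ∀ n : ℕ, ((n : ℝ) + 1) ^ 2 * c (n + 1) = (n + a) * (n + b) * c n) (hx : |x| < 1) :
    x * (1 - x) * powerSeriesSum (derivCoeff (derivCoeff c)) x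
      + (1 - (a + b + 1) * x) * powerSeriesSum (derivCoeff c) x = a * b * powerSeriesSum c x := by
  have hc' := isBigO_derivCoeff hc
  have hF := hasSum_powerSeriesSum hc hx
  have hF' := hasSum_powerSeriesSum hc' hx
  have hxF' := hasSum_natCast_mul_mul_pow hc hx
  have hxF'' := hasSum_natCast_mul_mul_pow hc' hx
  have hx2F'' : HasSum (fun n : ℕ => n * (n - 1) * c n * x ^ n)
      (x * (x * powerSeriesSum (derivCoeff (derivCoeff c)) x)) := by
    refine hasSum_of_hasSum_succ (by simp) ?_
    convert hxF''.mul_left x using 1 with n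
    · rfl
    · funext n
      simp only [derivCoeff]
      push_cast
      ring
  have hsum := (hxF''.add hF').sub (hx2F''.add ((hxF'.mul_left (a + b + 1))))
  have hterm : ∀ n : ℕ, (n * derivCoeff c n * x ^ n + derivCoeff c n * x ^ n)
      - (n * (n - 1) * c n * x ^ n + (a + b + 1) * (n * c n * x ^ n))
      = a * b * (c n * x ^ n) := fun n => by
    simp only [derivCoeff]
    linear_combination x ^ n * hrec n
  simp only [hterm] at hsum
  linear_combination hsum.unique (hF.mul_left (a * b))

end Hypergeometric

section Wronskian

variable {c : ℕ → ℝ} {k : ℕ} {a x y : ℝ}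

/-- `x (1 - x)` times the Wronskian of `P (1 - x)` and `P x`, where `P = powerSeriesSum c`.
When `P` solves the hypergeometric equation with `a + b = 1`, so does `P (1 - x)`, and Abel's
identity makes this constant (the generalized Legendre relation). -/
noncomputable def legendreWronskian (c : ℕ → ℝ) (x : ℝ) : ℝ :=
  x * (1 - x) * (powerSeriesSum (derivCoeff c) x * powerSeriesSum c (1 - x)
    + powerSeriesSum c x * powerSeriesSum (derivCoeff c) (1 - x))

theorem hasDerivAt_legendreWronskian (hc : c =O[atTop] fun n => ((n ^ k : ℕ) : ℝ))
    (hrec : ∀ n : ℕ, ((n : ℝ) + 1) ^ 2 * c (n + 1) = (n + a) * (n + (1 - a)) * c n)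
    (hx : x ∈ Ioo 0 1) : HasDerivAt (legendreWronskian c) 0 x := by
  have hx₁ : |x| < 1 := by rw [abs_of_pos hx.1]; exact hx.2
  have hx₂ : |1 - x| < 1 := by rw [abs_of_pos (by linarith [hx.2])]; linarith [hx.1]
  have hreflect : HasDerivAt (fun y : ℝ => 1 - y) (-1) x := by
    simpa using (hasDerivAt_id x).const_sub 1
  have hP := hasDerivAt_powerSeriesSum hc hx₁
  have hP' := hasDerivAt_powerSeriesSum (isBigO_derivCoeff hc) hx₁
  have hPr := (hasDerivAt_powerSeriesSum hc hx₂).comp x hreflect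
  have hPr' := (hasDerivAt_powerSeriesSum (isBigO_derivCoeff hc) hx₂).comp x hreflect
  have hW := ((hasDerivAt_id x).mul hreflect).mul ((hP'.mul hPr).add (hP.mul hPr'))
  refine hW.congr_deriv ?_
  simp only [id, Function.comp_def, Pi.add_apply, Pi.mul_apply]
  linear_combination powerSeriesSum c (1 - x) * hypergeometric_ode hc hrec hx₁
    - powerSeriesSum c x * hypergeometric_ode hc hrec hx₂

theorem legendreWronskian_eq (hc : c =O[atTop] fun n => ((n ^ k : ℕ) : ℝ))
    (hrec : ∀ n : ℕ, ((n : ℝ) + 1) ^ 2 * c (n + 1) = (n + a) * (n + (1 - a)) * c n)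
    (hx : x ∈ Ioo 0 1) (hy : y ∈ Ioo 0 1) : legendreWronskian c x = legendreWronskian c y :=
  isOpen_Ioo.is_const_of_deriv_eq_zero isPreconnected_Ioo
    (fun _ hz => (hasDerivAt_legendreWronskian hc hrec hz).differentiableAt.differentiableWithinAt)
    (fun _ hz => (hasDerivAt_legendreWronskian hc hrec hz).deriv) hx hy

lemma legendreWronskian_pos (hpos : ∀ n, 0 < c n)
    (hc : c =O[atTop] fun n => ((n ^ k : ℕ) : ℝ)) (hx : x ∈ Ioo 0 1) :
    0 < legendreWronskian c x := by
  have hpos' : ∀ n, 0 < derivCoeff c n := fun n => mul_pos (by positivity) (hpos (n + 1))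
  have hc' := isBigO_derivCoeff hc
  obtain ⟨hx0, hx1⟩ := hx
  have hy0 : 0 < 1 - x := by linarith
  have hy1 : 1 - x < 1 := by linarith
  have := powerSeriesSum_pos hpos hc hx0.le hx1
  have := powerSeriesSum_pos hpos' hc' hx0.le hx1
  have := powerSeriesSum_pos hpos hc hy0.le hy1
  have := powerSeriesSum_pos hpos' hc' hy0.le hy1
  unfold legendreWronskian
  positivity

end Wronskian

section GaussCoeff

noncomputable def gaussCoeff (a : ℝ) (n : ℕ) : ℝ :=
  (ascPochhammer ℝ n).eval a * (ascPochhammer ℝ n).eval (1 - a) / (n.factorial : ℝ) ^ 2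

variable {a : ℝ}

lemma GaussF_eq_powerSeriesSum (a x : ℝ) :
    GaussF a (1 - a) 1 x = powerSeriesSum (gaussCoeff a) x := by
  simp only [GaussF, powerSeriesSum, gaussCoeff, ascPochhammer_eval_one, sq, mul_comm]

lemma gaussCoeff_succ (a : ℝ) (n : ℕ) :
    ((n : ℝ) + 1) ^ 2 * gaussCoeff a (n + 1) = (n + a) * (n + (1 - a)) * gaussCoeff a n := by
  simp only [gaussCoeff, ascPochhammer_succ_eval, Nat.factorial_succ, Nat.cast_mul,
    Nat.cast_add, Nat.cast_one]
  field_simp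
  ring

lemma gaussCoeff_pos (ha : a ∈ Ioo 0 1) (n : ℕ) : 0 < gaussCoeff a n :=
  div_pos (mul_pos (ascPochhammer_pos n a ha.1) (ascPochhammer_pos n _ (sub_pos.2 ha.2)))
    (by positivity)

lemma gaussCoeff_le_one (ha : a ∈ Ioo 0 1) (n : ℕ) : gaussCoeff a n ≤ 1 := by
  induction n with
  | zero => simp [gaussCoeff]
  | succ n ih =>
    have hrec := gaussCoeff_succ a n
    have hn : (0 : ℝ) ≤ n := n.cast_nonneg
    -- `(n + a)(n + 1 - a) ≤ (n + 1)²` because `a (1 - a) ≤ 1/4`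
    nlinarith [gaussCoeff_pos ha n, gaussCoeff_pos ha (n + 1), sq_nonneg (a - 1 / 2)]

lemma isBigO_gaussCoeff (ha : a ∈ Ioo 0 1) :
    gaussCoeff a =O[atTop] fun n => ((n ^ 0 : ℕ) : ℝ) :=
  IsBigO.of_bound 1 <| Eventually.of_forall fun n => by
    simpa [abs_of_pos (gaussCoeff_pos ha n)] using gaussCoeff_le_one ha n

end GaussCoeff

namespace Real

lemma hasDerivAt_tanh (u : ℝ) : HasDerivAt tanh (1 - tanh u ^ 2) u := by
  have hcosh := (cosh_pos u).ne'
  rw [show tanh = fun x => sinh x / cosh x from funext tanh_eq_sinh_div_cosh]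
  refine ((hasDerivAt_sinh u).div (hasDerivAt_cosh u) hcosh).congr_deriv ?_
  field_simp

lemma strictMono_tanh : StrictMono tanh :=
  strictMono_of_hasDerivAt_pos hasDerivAt_tanh fun u => by linarith [tanh_sq_lt_one u]

lemma tanh_pos {u : ℝ} (hu : 0 < u) : 0 < tanh u := by
  simpa [tanh_zero] using strictMono_tanh hu

lemma tanh_sq_mem_Ioo {u : ℝ} (hu : 0 < u) : tanh u ^ 2 ∈ Ioo 0 1 :=
  ⟨pow_pos (tanh_pos hu) 2, tanh_sq_lt_one u⟩

lemma sqrt_one_sub_tanh_sq (u : ℝ) : √(1 - tanh u ^ 2) = (cosh u)⁻¹ := by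
  have hcosh := (cosh_pos u).ne'
  rw [← sqrt_sq (inv_nonneg.2 (cosh_pos u).le), tanh_eq_sinh_div_cosh]
  congr 1
  field_simp
  linear_combination cosh_sq u

lemma tanh_add_div_two (u v : ℝ) :
    tanh ((u + v) / 2) = (tanh u + tanh v)
      / (1 + tanh u * tanh v + √(1 - tanh u ^ 2) * √(1 - tanh v ^ 2)) := by
  set m := (u + v) / 2
  have huv : u + v = 2 * m := by ring
  have hsinh : sinh u * cosh v + cosh u * sinh v = 2 * sinh m * cosh m := by
    rw [← sinh_add, huv, sinh_two_mul]
  have hcosh : cosh u * cosh v + sinh u * sinh v + 1 = 2 * cosh m ^ 2 := by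
    rw [← cosh_add, huv, cosh_two_mul, cosh_sq]
    ring
  have := cosh_pos u
  have := cosh_pos v
  have := cosh_pos m
  rw [sqrt_one_sub_tanh_sq, sqrt_one_sub_tanh_sq]
  simp only [tanh_eq_sinh_div_cosh]
  field_simp
  rw [eq_div_iff (by rw [hcosh]; positivity)]
  linear_combination sinh m * hcosh - cosh m * hsinh

end Real

section Convexity

variable {c : ℕ → ℝ} {k : ℕ} {a : ℝ}

noncomputable def modulusRatio (c : ℕ → ℝ) (r : ℝ) : ℝ :=
  powerSeriesSum c (1 - r ^ 2) / powerSeriesSum c (r ^ 2)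

theorem hasDerivAt_modulusRatio_comp_tanh (hpos : ∀ n, 0 < c n)
    (hc : c =O[atTop] fun n => ((n ^ k : ℕ) : ℝ)) {u : ℝ} (hu : 0 < u) :
    HasDerivAt (modulusRatio c ∘ tanh)
      (-(2 * legendreWronskian c (tanh u ^ 2) / (tanh u * powerSeriesSum c (tanh u ^ 2) ^ 2)))
      u := by
  obtain ⟨hx0, hx1⟩ := tanh_sq_mem_Ioo hu
  have hsq : HasDerivAt (fun u => tanh u ^ 2) (2 * tanh u * (1 - tanh u ^ 2)) u := by
    refine ((hasDerivAt_tanh u).fun_pow 2).congr_deriv ?_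
    ring
  have hnum := (hasDerivAt_powerSeriesSum hc (x := 1 - tanh u ^ 2)
    (by rw [abs_of_pos (by linarith)]; linarith)).comp u (hsq.const_sub 1)
  have hden := (hasDerivAt_powerSeriesSum hc (by rwa [abs_of_pos hx0])).comp u hsq
  have hP := powerSeriesSum_pos hpos hc hx0.le hx1
  have htanh := tanh_pos hu
  refine (hnum.div hden hP.ne').congr_deriv ?_
  simp only [legendreWronskian, Function.comp_apply]
  field_simp
  ring

theorem convexOn_modulusRatio_comp_tanh (hpos : ∀ n, 0 < c n)
    (hc : c =O[atTop] fun n => ((n ^ k : ℕ) : ℝ))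
    (hrec : ∀ n : ℕ, ((n : ℝ) + 1) ^ 2 * c (n + 1) = (n + a) * (n + (1 - a)) * c n) :
    ConvexOn ℝ (Ioi 0) (modulusRatio c ∘ tanh) := by
  have hderiv := fun u (hu : u ∈ Ioi (0 : ℝ)) => hasDerivAt_modulusRatio_comp_tanh hpos hc hu
  refine MonotoneOn.convexOn_of_deriv (convex_Ioi 0)
    (fun u hu => (hderiv u hu).continuousAt.continuousWithinAt) ?_ ?_ <;> rw [interior_Ioi]
  · exact fun u hu => (hderiv u hu).differentiableAt.differentiableWithinAt
  intro u hu v hv huv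
  obtain ⟨hx0, hx1⟩ := tanh_sq_mem_Ioo hu
  have hWpos := legendreWronskian_pos hpos hc (tanh_sq_mem_Ioo hu)
  have htanh : tanh u ≤ tanh v := strictMono_tanh.monotone huv
  have hP : powerSeriesSum c (tanh u ^ 2) ≤ powerSeriesSum c (tanh v ^ 2) :=
    powerSeriesSum_le_powerSeriesSum (fun n => (hpos n).le) hc hx0.le
      (pow_le_pow_left₀ (tanh_pos hu).le htanh 2) (tanh_sq_mem_Ioo hv).2
  have hPpos := powerSeriesSum_pos hpos hc hx0.le hx1
  have := tanh_pos hu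
  have := (tanh_pos hv).le
  rw [(hderiv u hu).deriv, (hderiv v hv).deriv,
    legendreWronskian_eq hc hrec (tanh_sq_mem_Ioo hv) (tanh_sq_mem_Ioo hu), neg_le_neg_iff]
  gcongr

end Convexity

lemma muA_eq_mul_modulusRatio (a r : ℝ) :
    muA a r = π / (2 * sin (π * a)) * modulusRatio (gaussCoeff a) r := by
  rw [muA, modulusRatio, GaussF_eq_powerSeriesSum, GaussF_eq_powerSeriesSum, mul_div_assoc]

theorem muA_subadditive (a : ℝ) (ha : a ∈ Set.Ioc (0:ℝ) (1/2))
    (r t : ℝ) (hr : r ∈ Set.Ioo (0:ℝ) 1) (ht : t ∈ Set.Ioo (0:ℝ) 1) :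
    2 * muA a ((r + t) / (1 + r*t + Real.sqrt (1-r^2) * Real.sqrt (1-t^2))) ≤
      muA a r + muA a t ∧
    (t = r →
      2 * muA a ((r + t) / (1 + r*t + Real.sqrt (1-r^2) * Real.sqrt (1-t^2))) =
        muA a r + muA a t) := by
  have ha' : a ∈ Ioo 0 1 := ⟨ha.1, by linarith [ha.2]⟩
  have hconst : 0 < π / (2 * sin (π * a)) :=
    div_pos pi_pos (mul_pos two_pos (sin_pos_of_pos_of_lt_pi (by nlinarith [pi_pos, ha'.1])
      (by nlinarith [pi_pos, ha'.2])))
  have hconv : ConvexOn ℝ (Ioi 0) fun u => muA a (tanh u) := by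
    simp only [muA_eq_mul_modulusRatio]
    exact (convexOn_modulusRatio_comp_tanh (gaussCoeff_pos ha') (isBigO_gaussCoeff ha')
      (gaussCoeff_succ a)).smul hconst.le
  have htanh : ∀ x ∈ Ioo (0 : ℝ) 1, tanh (artanh x) = x :=
    fun x hx => tanh_artanh ⟨by linarith [hx.1], hx.2⟩
  have hmid : (r + t) / (1 + r * t + √(1 - r ^ 2) * √(1 - t ^ 2))
      = tanh ((artanh r + artanh t) / 2) := by
    rw [tanh_add_div_two, htanh r hr, htanh t ht]
  refine ⟨?_, fun htr => ?_⟩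
  · have := hconv.2 (artanh_pos hr) (artanh_pos ht) (by norm_num : (0 : ℝ) ≤ 1 / 2)
      (by norm_num : (0 : ℝ) ≤ 1 / 2) (by norm_num)
    rw [show (1 / 2 : ℝ) • artanh r + (1 / 2 : ℝ) • artanh t = (artanh r + artanh t) / 2 by
      simp only [smul_eq_mul]; ring] at this
    simp only [smul_eq_mul, htanh r hr, htanh t ht] at this
    rw [hmid]
    linarith
  · rw [hmid, htr, add_self_div_two, htanh r hr]
    ring
end

section
/- For a, b ∈ (0,1) with a + b ≤ 1 and all r ∈ (0,1), the Landen inequality holds: F(a,b;a+b;(2√r/(1+r))²) ≤ (1+r)·F(a,b;a+b;r²). -/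
open Real Set intervalIntegral
open scoped Nat

theorem GaussF_eq_ordinaryHypergeometric (a b c x : ℝ) : GaussF a b c x = ₂F₁ a b c x := by
  rw [GaussF, ordinaryHypergeometric_eq_tsum]
  congr! 2 with n
  rw [smul_eq_mul]
  ring

theorem hasSum_GaussF {a b c x : ℝ} (habc : ∀ k : ℕ, (k : ℝ) ≠ -a ∧ (k : ℝ) ≠ -b ∧ (k : ℝ) ≠ -c)
    (hx : |x| < 1) :
    HasSum (fun n ↦ ordinaryHypergeometricCoefficient a b c n * x ^ n) (GaussF a b c x) := by
  have hx' : x ∈ Metric.eball (0 : ℝ) (ordinaryHypergeometricSeries ℝ a b c).radius := by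
    rw [ordinaryHypergeometricSeries_radius_eq_one ℝ a b c habc]
    simpa [enorm_eq_nnnorm, ← NNReal.coe_lt_coe] using hx
  have h := (ordinaryHypergeometricSeries ℝ a b c).hasSum hx'
  rw [ordinaryHypergeometricSeries_apply_eq'] at h
  rw [GaussF_eq_ordinaryHypergeometric]
  exact h

theorem natCast_ne_neg_of_pos {a : ℝ} (ha : 0 < a) (k : ℕ) : (k : ℝ) ≠ -a :=
  (neg_neg_of_pos ha |>.trans_le k.cast_nonneg).ne'

theorem hasSum_GaussF_of_pos {a b c x : ℝ} (ha : 0 < a) (hb : 0 < b) (hc : 0 < c) (hx : |x| < 1) :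
    HasSum (fun n ↦ ordinaryHypergeometricCoefficient a b c n * x ^ n) (GaussF a b c x) :=
  hasSum_GaussF (fun k ↦ ⟨natCast_ne_neg_of_pos ha k, natCast_ne_neg_of_pos hb k,
    natCast_ne_neg_of_pos hc k⟩) hx

theorem ordinaryHypergeometricCoefficient_succ {𝕂 : Type*} [Field 𝕂] (a b c : 𝕂) (n : ℕ) :
    ordinaryHypergeometricCoefficient a b c (n + 1) =
      ordinaryHypergeometricCoefficient a b c n * ((a + n) * (b + n) / ((c + n) * (n + 1))) := by
  simp only [ordinaryHypergeometricCoefficient, ascPochhammer_succ_eval, Nat.factorial_succ,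
    Nat.cast_mul, Nat.cast_succ, div_eq_mul_inv, mul_inv]
  ring

theorem ordinaryHypergeometricCoefficient_pos {a b c : ℝ} (ha : 0 < a) (hb : 0 < b) (hc : 0 < c)
    (n : ℕ) : 0 < ordinaryHypergeometricCoefficient a b c n := by
  have := ascPochhammer_pos n a ha
  have := ascPochhammer_pos n b hb
  have := ascPochhammer_pos n c hc
  positivity

theorem ordinaryHypergeometricCoefficient_half_half_one (n : ℕ) :
    ordinaryHypergeometricCoefficient (1 / 2 : ℝ) (1 / 2) 1 n =
      ((ascPochhammer ℝ n).eval (1 / 2) / n !) ^ 2 := by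
  have : (n ! : ℝ) ≠ 0 := by positivity
  rw [ordinaryHypergeometricCoefficient, ascPochhammer_eval_one]
  field_simp

theorem antitone_ordinaryHypergeometricCoefficient_div {a b : ℝ} (ha : 0 < a) (hb : 0 < b)
    (hab : a + b ≤ 1) :
    Antitone fun n ↦ ordinaryHypergeometricCoefficient a b (a + b) n /
      ordinaryHypergeometricCoefficient (1 / 2 : ℝ) (1 / 2) 1 n := by
  refine antitone_nat_of_succ_le fun n ↦ ?_
  have hc := ordinaryHypergeometricCoefficient_pos ha hb (add_pos ha hb) n
  have hk := ordinaryHypergeometricCoefficient_pos (by norm_num : (0 : ℝ) < 1 / 2)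
    (by norm_num : (0 : ℝ) < 1 / 2) one_pos n
  rw [ordinaryHypergeometricCoefficient_succ, ordinaryHypergeometricCoefficient_succ,
    mul_div_mul_comm]
  refine mul_le_of_le_one_right (div_nonneg hc.le hk.le) ?_
  have hn : (0 : ℝ) ≤ n := n.cast_nonneg
  rw [div_le_one (by positivity), div_le_div_iff₀ (by positivity) (by positivity)]
  -- up to the factor `n + 1`, the difference of the two sides is `(1/4 - ab) n + (a + b)/4 - ab`,
  -- which is nonnegative since `4ab ≤ (a + b)² ≤ a + b ≤ 1`
  have hab4 : 4 * (a * b) ≤ a + b := by nlinarith [sq_nonneg (a - b)]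
  nlinarith [mul_nonneg hn (by linarith : 0 ≤ 1 - 4 * (a * b)), mul_nonneg hn hn]

theorem hasSum_mul_le_of_antitone_div {c k d : ℕ → ℝ} {A B : ℝ} {N : ℕ} (hk : ∀ n, 0 < k n)
    (hck : Antitone fun n ↦ c n / k n) (hd_neg : ∀ n < N, d n ≤ 0)
    (hd_nonneg : ∀ n, N ≤ n → 0 ≤ d n)
    (hA : HasSum (fun n ↦ c n * d n) A) (hB : HasSum (fun n ↦ k n * d n) B) :
    A ≤ c N / k N * B := by
  refine hasSum_le (fun n ↦ ?_) hA (hB.mul_left _)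
  rw [← mul_assoc]
  rcases lt_or_ge n N with hn | hn
  · exact mul_le_mul_of_nonpos_right ((le_div_iff₀ (hk n)).mp (hck hn.le)) (hd_neg n hn)
  · exact mul_le_mul_of_nonneg_right ((div_le_iff₀ (hk n)).mp (hck hn)) (hd_nonneg n hn)

theorem exists_pow_sub_mul_pow_sign_change (C : ℝ) {x t : ℝ} (hx : 0 < x) (hxt : x < t) :
    ∃ N, (∀ n < N, t ^ n - C * x ^ n ≤ 0) ∧ ∀ n, N ≤ n → 0 ≤ t ^ n - C * x ^ n := by
  classical
  have hex : ∃ N, C * x ^ N ≤ t ^ N := by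
    obtain ⟨N, hN⟩ := pow_unbounded_of_one_lt C ((one_lt_div hx).mpr hxt)
    rw [div_pow, lt_div_iff₀ (by positivity)] at hN
    exact ⟨N, hN.le⟩
  have hstep (n : ℕ) (h : C * x ^ n ≤ t ^ n) : C * x ^ (n + 1) ≤ t ^ (n + 1) :=
    calc C * x ^ (n + 1) = x * (C * x ^ n) := by ring
      _ ≤ x * t ^ n := mul_le_mul_of_nonneg_left h hx.le
      _ ≤ t * t ^ n := mul_le_mul_of_nonneg_right hxt.le (pow_nonneg (hx.trans hxt).le n)
      _ = t ^ (n + 1) := by ring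
  refine ⟨Nat.find hex, fun n hn ↦ ?_, fun n hn ↦ ?_⟩
  · exact sub_nonpos.mpr (not_le.mp (Nat.find_min hex hn)).le
  · induction n, hn using Nat.le_induction with
    | base => exact sub_nonneg.mpr (Nat.find_spec hex)
    | succ n _ ih => exact sub_nonneg.mpr (hstep n (sub_nonneg.mp ih))

theorem le_mul_of_hasSum_of_antitone_div {c k : ℕ → ℝ} {x t C A B K : ℝ} (hk : ∀ n, 0 < k n)
    (hck : Antitone fun n ↦ c n / k n) (hx : 0 < x) (hxt : x < t)
    (hA : HasSum (fun n ↦ c n * t ^ n) A) (hB : HasSum (fun n ↦ c n * x ^ n) B)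
    (hKt : HasSum (fun n ↦ k n * t ^ n) (C * K)) (hKx : HasSum (fun n ↦ k n * x ^ n) K) :
    A ≤ C * B := by
  obtain ⟨N, hneg, hpos⟩ := exists_pow_sub_mul_pow_sign_change C hx hxt
  have hcd : HasSum (fun n ↦ c n * (t ^ n - C * x ^ n)) (A - C * B) := by
    simpa only [mul_sub, mul_left_comm] using hA.sub (hB.mul_left C)
  have hkd : HasSum (fun n ↦ k n * (t ^ n - C * x ^ n)) 0 := by
    simpa only [mul_sub, mul_left_comm, sub_self] using hKt.sub (hKx.mul_left C)
  have := hasSum_mul_le_of_antitone_div hk hck hneg hpos hcd hkd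
  rw [mul_zero] at this
  linarith

theorem hasSum_ascPochhammer_div_factorial_mul_pow (a : ℝ) {y : ℝ} (hy : |y| < 1) :
    HasSum (fun n ↦ (ascPochhammer ℝ n).eval a / n ! * y ^ n) (1 / (1 - y) ^ a) := by
  have h := (one_div_one_sub_rpow_hasFPowerSeriesOnBall_zero a).hasSum
    (y := y) (by simpa [enorm_eq_nnnorm, ← NNReal.coe_lt_coe] using hy)
  have hchoose (n : ℕ) : Ring.choose (a + n - 1) n = (ascPochhammer ℝ n).eval a / n ! := by
    rw [Ring.choose_eq_smul, Polynomial.descPochhammer_smeval_eq_ascPochhammer,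
      Polynomial.ascPochhammer_smeval_eq_eval, smul_eq_mul, inv_mul_eq_div]
    ring_nf
  simp only [zero_add, FormalMultilinearSeries.ofScalars_apply_eq, smul_eq_mul, hchoose] at h
  exact h

theorem integral_sin_pow_even_zero_pi_div_two (n : ℕ) :
    ∫ θ in (0 : ℝ)..π / 2, sin θ ^ (2 * n) = π / 2 * ((ascPochhammer ℝ n).eval (1 / 2) / n !) := by
  induction n with
  | zero => simp
  | succ n ih =>
    rw [mul_add_one, integral_sin_pow, ih, ascPochhammer_succ_eval, Nat.factorial_succ]
    simp only [sin_zero, cos_pi_div_two, ne_eq, add_eq_zero, one_ne_zero, and_false,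
      not_false_eq_true, zero_pow, zero_mul, mul_zero, sub_zero, zero_div, zero_add]
    push_cast
    field_simp
    ring

noncomputable def ellipticK (k : ℝ) : ℝ :=
  ∫ θ in (0 : ℝ)..π / 2, 1 / √(1 - k ^ 2 * sin θ ^ 2)

theorem hasSum_inv_sqrt_one_sub_mul_sin_sq {k : ℝ} (hk : |k| < 1) (θ : ℝ) :
    HasSum (fun n ↦ (ascPochhammer ℝ n).eval (1 / 2) / n ! * k ^ (2 * n) * sin θ ^ (2 * n))
      (1 / √(1 - k ^ 2 * sin θ ^ 2)) := by
  have hy : |k ^ 2 * sin θ ^ 2| < 1 := by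
    have hk2 : k ^ 2 < 1 := (sq_lt_one_iff_abs_lt_one k).2 hk
    rw [abs_of_nonneg (by positivity)]
    nlinarith [sin_sq_le_one θ, sq_nonneg k]
  have h := hasSum_ascPochhammer_div_factorial_mul_pow (1 / 2) hy
  rw [← sqrt_eq_rpow] at h
  convert h using 2 with n
  ring

theorem hasSum_ellipticK {k : ℝ} (hk : |k| < 1) :
    HasSum (fun n ↦ π / 2 * ordinaryHypergeometricCoefficient (1 / 2 : ℝ) (1 / 2) 1 n * (k ^ 2) ^ n)
      (ellipticK k) := by
  set A : ℕ → ℝ := fun n ↦ (ascPochhammer ℝ n).eval (1 / 2) / (n ! : ℝ)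
  have hA (n : ℕ) : 0 ≤ A n := by
    have := ascPochhammer_pos n (1 / 2 : ℝ) (by norm_num)
    positivity
  have hbound := hasSum_inv_sqrt_one_sub_mul_sin_sq hk (π / 2)
  simp only [sin_pi_div_two, one_pow, mul_one] at hbound
  have hcont (n : ℕ) : Continuous fun θ ↦ A n * k ^ (2 * n) * sin θ ^ (2 * n) := by fun_prop
  have h := intervalIntegral.hasSum_integral_of_dominated_convergence (a := 0) (b := π / 2)
    (μ := MeasureTheory.volume) (fun n _ ↦ A n * k ^ (2 * n))
    (fun n ↦ (hcont n).aestronglyMeasurable)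
    (fun n ↦ Filter.Eventually.of_forall fun θ _ ↦ ?_)
    (Filter.Eventually.of_forall fun θ _ ↦ hbound.summable) intervalIntegrable_const
    (Filter.Eventually.of_forall fun θ _ ↦ hasSum_inv_sqrt_one_sub_mul_sin_sq hk θ)
  · have e (n : ℕ) : ∫ θ in (0 : ℝ)..π / 2, A n * k ^ (2 * n) * sin θ ^ (2 * n) =
        π / 2 * ordinaryHypergeometricCoefficient (1 / 2 : ℝ) (1 / 2) 1 n * (k ^ 2) ^ n := by
      rw [integral_const_mul, integral_sin_pow_even_zero_pi_div_two,
        ordinaryHypergeometricCoefficient_half_half_one, pow_mul]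
      ring
    simp only [e] at h
    exact h
  · have hcoeff : 0 ≤ A n * k ^ (2 * n) := mul_nonneg (hA n) (by rw [pow_mul]; positivity)
    rw [norm_mul, norm_pow, Real.norm_of_nonneg hcoeff]
    exact mul_le_of_le_one_right hcoeff (pow_le_one₀ (norm_nonneg _) (abs_sin_le_one θ))

theorem ellipticK_eq_GaussF {k : ℝ} (hk : |k| < 1) :
    ellipticK k = π / 2 * GaussF (1 / 2) (1 / 2) 1 (k ^ 2) := by
  have hk2 : |k ^ 2| < 1 := by rwa [abs_pow, sq_lt_one_iff₀ (abs_nonneg k)]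
  refine (hasSum_ellipticK hk).unique ?_
  simpa only [mul_assoc] using
    (hasSum_GaussF_of_pos (by norm_num) (by norm_num) one_pos hk2).mul_left (π / 2)

noncomputable def landenSin (r ψ : ℝ) : ℝ := (1 + r) * sin ψ / (1 + r * sin ψ ^ 2)

section Landen

variable {r : ℝ}

theorem landen_modulus_sq (hr : 0 ≤ r) : (2 * √r / (1 + r)) ^ 2 = 4 * r / (1 + r) ^ 2 := by
  rw [div_pow, mul_pow, sq_sqrt hr]
  norm_num

theorem landen_modulus_sq_lt_one (hr0 : 0 ≤ r) (hr1 : r < 1) : (2 * √r / (1 + r)) ^ 2 < 1 := by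
  rw [landen_modulus_sq hr0, div_lt_one (by positivity)]
  nlinarith [sq_pos_of_pos (sub_pos.mpr hr1)]

theorem sq_lt_landen_modulus_sq (hr0 : 0 < r) (hr1 : r < 1) : r ^ 2 < (2 * √r / (1 + r)) ^ 2 := by
  rw [landen_modulus_sq hr0.le, lt_div_iff₀ (by positivity)]
  nlinarith [mul_pos hr0 (sub_pos.mpr hr1)]

theorem one_add_mul_sin_sq_pos (hr : 0 ≤ r) (ψ : ℝ) : 0 < 1 + r * sin ψ ^ 2 := by positivity

theorem one_sub_mul_sin_sq_pos (hr0 : 0 ≤ r) (hr1 : r < 1) (ψ : ℝ) :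
    0 < 1 - r * sin ψ ^ 2 := by
  nlinarith [sin_sq_le_one ψ]

theorem one_sub_sq_mul_sin_sq_pos (hr0 : 0 ≤ r) (hr1 : r < 1) (ψ : ℝ) :
    0 < 1 - r ^ 2 * sin ψ ^ 2 := by
  nlinarith [sin_sq_le_one ψ]

theorem hasDerivAt_landenSin (hr : 0 ≤ r) (ψ : ℝ) :
    HasDerivAt (landenSin r)
      ((1 + r) * cos ψ * (1 - r * sin ψ ^ 2) / (1 + r * sin ψ ^ 2) ^ 2) ψ := by
  have hD := one_add_mul_sin_sq_pos hr ψ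
  have h := ((hasDerivAt_sin ψ).const_mul (1 + r)).div
    ((((hasDerivAt_sin ψ).fun_pow 2).const_mul r).const_add 1) hD.ne'
  refine h.congr_deriv ?_
  field_simp
  ring

theorem one_sub_landenSin_sq (hr : 0 ≤ r) (ψ : ℝ) :
    1 - landenSin r ψ ^ 2 =
      cos ψ ^ 2 * (1 - r ^ 2 * sin ψ ^ 2) / (1 + r * sin ψ ^ 2) ^ 2 := by
  have hD := one_add_mul_sin_sq_pos hr ψ
  rw [landenSin, cos_sq']
  field_simp
  ring

theorem abs_landenSin_le_one (hr0 : 0 ≤ r) (hr1 : r < 1) (ψ : ℝ) : |landenSin r ψ| ≤ 1 := by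
  rw [← sq_le_one_iff_abs_le_one, ← sub_nonneg, one_sub_landenSin_sq hr0]
  have := one_sub_sq_mul_sin_sq_pos hr0 hr1 ψ
  positivity

theorem hasDerivAt_arcsin_landenSin (hr0 : 0 ≤ r) (hr1 : r < 1) {ψ : ℝ}
    (hψ : ψ ∈ Ioo 0 (π / 2)) :
    HasDerivAt (fun ψ ↦ arcsin (landenSin r ψ))
      ((1 + r) * (1 - r * sin ψ ^ 2) / ((1 + r * sin ψ ^ 2) * √(1 - r ^ 2 * sin ψ ^ 2))) ψ := by
  have hcos : 0 < cos ψ := cos_pos_of_mem_Ioo ⟨by linarith [hψ.1, pi_pos], hψ.2⟩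
  have hD := one_add_mul_sin_sq_pos hr0 ψ
  have hQ := one_sub_sq_mul_sin_sq_pos hr0 hr1 ψ
  have hsqrt :
      √(1 - landenSin r ψ ^ 2) = cos ψ * √(1 - r ^ 2 * sin ψ ^ 2) / (1 + r * sin ψ ^ 2) := by
    rw [one_sub_landenSin_sq hr0, sqrt_eq_iff_eq_sq (by positivity) (by positivity), div_pow,
      mul_pow, sq_sqrt hQ.le]
  have hsq_lt : landenSin r ψ ^ 2 < 1 := by
    have : 0 < √(1 - landenSin r ψ ^ 2) := by rw [hsqrt]; positivity
    rw [sqrt_pos] at this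
    linarith
  obtain ⟨hgt, hlt⟩ := abs_lt.mp ((sq_lt_one_iff_abs_lt_one _).mp hsq_lt)
  have harcsin := hasDerivAt_arcsin hgt.ne' hlt.ne
  refine (harcsin.comp ψ (hasDerivAt_landenSin hr0 ψ)).congr_deriv ?_
  rw [hsqrt]
  field_simp

theorem one_sub_landen_modulus_sq_mul_landenSin_sq (hr : 0 ≤ r) (ψ : ℝ) :
    1 - (2 * √r / (1 + r)) ^ 2 * landenSin r ψ ^ 2 =
      ((1 - r * sin ψ ^ 2) / (1 + r * sin ψ ^ 2)) ^ 2 := by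
  have hD := one_add_mul_sin_sq_pos hr ψ
  rw [div_pow, mul_pow, sq_sqrt hr, landenSin]
  field_simp
  ring

theorem ellipticK_landen (hr0 : 0 ≤ r) (hr1 : r < 1) :
    ellipticK (2 * √r / (1 + r)) = (1 + r) * ellipticK r := by
  have hk := landen_modulus_sq_lt_one hr0 hr1
  have hD := one_add_mul_sin_sq_pos hr0
  have hP := one_sub_mul_sin_sq_pos hr0 hr1
  have hQ := one_sub_sq_mul_sin_sq_pos hr0 hr1
  set f : ℝ → ℝ := fun ψ ↦ arcsin (landenSin r ψ)
  set f' : ℝ → ℝ := fun ψ ↦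
    (1 + r) * (1 - r * sin ψ ^ 2) / ((1 + r * sin ψ ^ 2) * √(1 - r ^ 2 * sin ψ ^ 2))
  set g : ℝ → ℝ := fun θ ↦ 1 / √(1 - (2 * √r / (1 + r)) ^ 2 * sin θ ^ 2)
  have hf : Continuous f := continuous_arcsin.comp <|
    (by fun_prop : Continuous fun ψ ↦ (1 + r) * sin ψ).div (by fun_prop) fun ψ ↦ (hD ψ).ne'
  have hf' : Continuous f' := by
    refine (by fun_prop : Continuous fun ψ ↦ (1 + r) * (1 - r * sin ψ ^ 2)).div (by fun_prop) ?_
    exact fun ψ ↦ (mul_pos (hD ψ) (sqrt_pos.mpr (hQ ψ))).ne'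
  have hg : Continuous g := by
    refine continuous_const.div (by fun_prop) fun θ ↦ (sqrt_pos.mpr ?_).ne'
    nlinarith [sin_sq_le_one θ, sq_nonneg (2 * √r / (1 + r))]
  have hff' (ψ : ℝ) (hψ : ψ ∈ Ioo (min 0 (π / 2)) (max 0 (π / 2))) :
      HasDerivWithinAt f (f' ψ) (Ioi ψ) ψ := by
    rw [min_eq_left (by positivity), max_eq_right (by positivity)] at hψ
    exact (hasDerivAt_arcsin_landenSin hr0 hr1 hψ).hasDerivWithinAt
  have hsubst := integral_comp_mul_deriv'' hf.continuousOn hff' hf'.continuousOn hg.continuousOn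
  have hf0 : f 0 = 0 := by simp [f, landenSin]
  have hfpi : f (π / 2) = π / 2 := by
    simp [f, landenSin, div_self (by linarith : (1 + r) ≠ 0)]
  have hintegrand (ψ : ℝ) : (g ∘ f) ψ * f' ψ = (1 + r) * (1 / √(1 - r ^ 2 * sin ψ ^ 2)) := by
    have hψ := abs_le.mp (abs_landenSin_le_one hr0 hr1 ψ)
    simp only [Function.comp_apply, g, f, f', sin_arcsin hψ.1 hψ.2,
      one_sub_landen_modulus_sq_mul_landenSin_sq hr0, sqrt_sq (div_pos (hP ψ) (hD ψ)).le]
    field_simp [(sqrt_pos.mpr (hQ ψ)).ne', (hP ψ).ne', (hD ψ).ne']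
  rw [hf0, hfpi, funext hintegrand, integral_const_mul] at hsubst
  rw [ellipticK, ellipticK, ← hsubst]

theorem GaussF_half_half_one_landen (hr0 : 0 ≤ r) (hr1 : r < 1) :
    GaussF (1 / 2) (1 / 2) 1 ((2 * √r / (1 + r)) ^ 2) =
      (1 + r) * GaussF (1 / 2) (1 / 2) 1 (r ^ 2) := by
  have hk := (sq_lt_one_iff_abs_lt_one _).mp (landen_modulus_sq_lt_one hr0 hr1)
  have h := ellipticK_landen hr0 hr1
  rw [ellipticK_eq_GaussF hk, ellipticK_eq_GaussF (by rwa [abs_of_nonneg hr0])] at h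
  have hpi : π / 2 ≠ 0 := by positivity
  apply mul_left_cancel₀ hpi
  linear_combination h

end Landen

theorem landen_inequality (a b : ℝ) (ha : a ∈ Set.Ioo (0:ℝ) 1)
    (hb : b ∈ Set.Ioo (0:ℝ) 1) (hab : a + b ≤ 1) (r : ℝ) (hr : r ∈ Set.Ioo (0:ℝ) 1) :
    GaussF a b (a+b) ((2 * Real.sqrt r / (1 + r))^2) ≤
      (1 + r) * GaussF a b (a+b) (r^2) := by
  obtain ⟨ha, -⟩ := ha
  obtain ⟨hb, -⟩ := hb
  obtain ⟨hr0, hr1⟩ := hr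
  have hx : 0 < r ^ 2 := by positivity
  have hx1 : |r ^ 2| < 1 := by rw [abs_of_pos hx]; nlinarith
  have ht1 : |(2 * √r / (1 + r)) ^ 2| < 1 := by
    rw [abs_of_nonneg (by positivity)]
    exact landen_modulus_sq_lt_one hr0.le hr1
  have hhalf : (0 : ℝ) < 1 / 2 := by norm_num
  have hK := hasSum_GaussF_of_pos hhalf hhalf one_pos ht1
  rw [GaussF_half_half_one_landen hr0.le hr1] at hK
  have hab0 := add_pos ha hb
  exact le_mul_of_hasSum_of_antitone_div
    (ordinaryHypergeometricCoefficient_pos hhalf hhalf one_pos)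
    (antitone_ordinaryHypergeometricCoefficient_div ha hb hab) hx (sq_lt_landen_modulus_sq hr0 hr1)
    (hasSum_GaussF_of_pos ha hb hab0 ht1) (hasSum_GaussF_of_pos ha hb hab0 hx1)
    hK (hasSum_GaussF_of_pos hhalf hhalf one_pos hx1)
end
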